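/- Let H be a real symmetric bilinear form on \mathbb{R}^{2n} (standard J, g) whose J-invariant part satisfies g + H^{(1,1)} > 0. Then the operator norm of H is controlled by its largest eigenvalue: |H|_g \le C\lambda_1(H) + C for a constant C depending only on n. Concretely, every eigenvalue \mu of H satisfies \mu > -2\lambda_1(H) - 2 whenever \lambda_1(H) \ge 0, hence |H|_g \le 2\lambda_1(H) + 2. -/
import Mathlib


/-- Real vectors in `ℝ^{2n} ≅ ℂⁿ`: `x`-components and `y`-components. -/
def RVec (n : ℕ) : Type := (Fin n → ℝ) × (Fin n → ℝ)

/-- The standard complex structure `J(a,b) = (-b,a)`. -/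
def Jstd {n : ℕ} (v : RVec n) : RVec n := (-v.2, v.1)

/-- The standard Euclidean metric. -/
def gstd {n : ℕ} (v w : RVec n) : ℝ := ∑ q, (v.1 q * w.1 q + v.2 q * w.2 q)

/-- If `H` is a symmetric bilinear form on `ℝ^{2n}` whose `J`-invariant part satisfies
`g + H^{(1,1)} > 0`, and `λ₁ ≥ 0` is its largest eigenvalue (max of the Rayleigh quotient),
then every eigenvalue `μ` of `H` satisfies `μ > -2λ₁ - 2`, and hence `|μ| ≤ 2λ₁ + 2`:
the operator norm of `H` is bounded by `2λ₁(H) + 2`. -/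
theorem stmt_16 (n : ℕ) (H : RVec n → RVec n → ℝ)
    (hbil1 : ∀ (c : ℝ) (v v' w : RVec n),
      H (c • v.1, c • v.2) w = c * H v w ∧ H (v.1 + v'.1, v.2 + v'.2) w = H v w + H v' w)
    (hsymm : ∀ v w, H v w = H w v)
    (hpos : ∀ v : RVec n, v ≠ (0, 0) → 0 < gstd v v + (1 / 2) * (H v v + H (Jstd v) (Jstd v)))
    (lam1 : ℝ) (hlam1 : 0 ≤ lam1)
    (hmax : ∀ v : RVec n, gstd v v = 1 → H v v ≤ lam1) :
    ∀ (μ : ℝ) (V : RVec n), gstd V V = 1 → (∀ w, H V w = μ * gstd V w) →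
      (-2 * lam1 - 2 < μ ∧ μ ≤ lam1) ∧ |μ| ≤ 2 * lam1 + 2 := by
  intro μ V hV heig
  have hVV : H V V = μ := by
    have := heig V
    rw [hV] at this
    simpa using this
  have hVne : V ≠ (0, 0) := by
    intro h
    rw [h] at hV
    simp [gstd] at hV
  have hJV : gstd (Jstd V) (Jstd V) = 1 := by
    rw [← hV]
    unfold gstd Jstd
    apply Finset.sum_congr rfl
    intro q _
    simp
    ring
  have hmu1 : μ ≤ lam1 := by
    have := hmax V hV
    rwa [hVV] at this
  have hJle : H (Jstd V) (Jstd V) ≤ lam1 := hmax _ hJV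
  have hp := hpos V hVne
  rw [hV, hVV] at hp
  have hlow : -lam1 - 2 < μ := by linarith
  refine ⟨⟨by linarith, hmu1⟩, ?_⟩
  rw [abs_le]
  constructor <;> linarith
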